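/- Let G, M be symmetric positive semidefinite n×n matrices with dual minimizers c_G, c_M, let k, m ∈ ℝ^n, and set Y = diag(y), Δ = G − M, C_M = (4/n)·I + (1/(λn²))·Y M Y, E_Δ = (1/(λn²))·Y Δ Y, b = (1/(λn²))·Y Δ Y c_M, and γ = ‖C_M^{−1/2} E_Δ C_M^{−1/2}‖_op. For a ∈ ℝ^n define ℰ(a; b) = (1/(2(1−γ)))·( |aᵀ C_M^{−1} b| + √(aᵀ C_M^{−1} a)·√(bᵀ C_M^{−1} b) ) when γ < 1. With ζ = k − m, a_m = (1/(λn))·Y m, a_ζ = (1/(λn))·Y ζ: if γ < 1, then |s_{k,G} − s_{m,M}| ≤ (1/(λn))·|ζᵀ Y c_M| + ℰ(a_m; b) + ℰ(a_ζ; b). -/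

import Mathlib

/-!
Since `φ'' = 1/c + 1/(1-c) ≥ 4` on `(0,1)`, the dual objective splits as
`D_K(c) = g(c) + ½·cᵀ C_K c` with `g` convex on the box and `C_K = (4/n)·I + (1/(λn²))·Y K Y`;
in particular `C_G = C_M + E_Δ`. Adding the quadratic-growth inequalities of `D_M` at `c_M` and of
`D_G` at `c_G` cancels `g` and leaves `dᵀ(C_M + E_Δ)d + bᵀd ≤ 0` for `d = c_G − c_M`. Writing
`d = C_M^{−1/2} u` and using `|uᵀ C_M^{−1/2} E_Δ C_M^{−1/2} u| ≤ γ‖u‖²`, this becomes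
`(1−γ)‖u‖² + ⟨C_M^{−1/2} b, u⟩ ≤ 0`: `u` lies in the ball of radius `‖C_M^{−1/2} b‖/(2(1−γ))`
about `−C_M^{−1/2} b/(2(1−γ))`, which bounds every linear functional `aᵀd` by `ℰ(a; b)`.
The score difference is `(1/(λn))·ζᵀ Y c_M + a_mᵀ d + a_ζᵀ d`.
-/

open Matrix Set

/-- Binary entropy potential, with Lean's convention `Real.log 0 = 0`. -/
noncomputable def phiEnt (c : ℝ) : ℝ := c * Real.log c + (1 - c) * Real.log (1 - c)

/-- The dual objective
`D_K(c) = (1/n)·∑ᵢ φ(cᵢ) + (1/(2λn²))·(y⊙c)ᵀ K (y⊙c)`. -/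
noncomputable def dualObj {n : ℕ} (lam : ℝ) (y : Fin n → ℝ)
    (K : Matrix (Fin n) (Fin n) ℝ) (c : Fin n → ℝ) : ℝ :=
  (1 / n) * ∑ i, phiEnt (c i) +
    (1 / (2 * lam * (n : ℝ) ^ 2)) * ((fun i => y i * c i) ⬝ᵥ (K *ᵥ fun i => y i * c i))

/-- The score `s_{k,G} = (1/(λn))·kᵀ(y⊙c)`. -/
noncomputable def score {n : ℕ} (lam : ℝ) (y k c : Fin n → ℝ) : ℝ :=
  (1 / (lam * n)) * (k ⬝ᵥ fun i => y i * c i)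

/-- Operator (spectral) norm of a real square matrix. -/
noncomputable def opNorm {n : ℕ} (A : Matrix (Fin n) (Fin n) ℝ) : ℝ :=
  ‖(Matrix.toEuclideanCLM (𝕜 := ℝ) A :
      EuclideanSpace ℝ (Fin n) →L[ℝ] EuclideanSpace ℝ (Fin n))‖

/-- `ℰ(a; b) = (1/(2(1−γ)))·( |aᵀ C_M⁻¹ b| + √(aᵀ C_M⁻¹ a)·√(bᵀ C_M⁻¹ b) )`. -/
noncomputable def calE {n : ℕ} (CM : Matrix (Fin n) (Fin n) ℝ) (γ : ℝ)
    (a b : Fin n → ℝ) : ℝ :=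
  (1 / (2 * (1 - γ))) * (|a ⬝ᵥ (CM⁻¹ *ᵥ b)| +
    Real.sqrt (a ⬝ᵥ (CM⁻¹ *ᵥ a)) * Real.sqrt (b ⬝ᵥ (CM⁻¹ *ᵥ b)))

open Filter Topology

lemma phiEnt_eq_neg_binEntropy (c : ℝ) : phiEnt c = -Real.binEntropy c := by
  simp only [phiEnt, Real.binEntropy, Real.log_inv]; ring

lemma convexOn_phiEnt_sub_two_mul_sq :
    ConvexOn ℝ (Icc 0 1) (fun c => phiEnt c - 2 * c ^ 2) := by
  simp only [phiEnt_eq_neg_binEntropy]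
  refine convexOn_of_hasDerivWithinAt2_nonneg (convex_Icc 0 1)
    (f' := fun c => Real.log c - Real.log (1 - c) - 4 * c)
    (f'' := fun c => c⁻¹ + (1 - c)⁻¹ - 4) (by fun_prop) ?_ ?_ ?_
  all_goals rw [interior_Icc]; rintro c ⟨hc₀, hc₁⟩
  · exact ((Real.hasDerivAt_binEntropy hc₀.ne' hc₁.ne).neg.sub
      ((hasDerivAt_pow 2 c).const_mul 2)).congr_deriv (by norm_num; ring) |>.hasDerivWithinAt
  · have h1c : 1 - c ≠ 0 := by linarith
    exact ((Real.hasDerivAt_log hc₀.ne').sub (((hasDerivAt_id c).const_sub 1).log h1c)).sub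
      ((hasDerivAt_id c).const_mul 4) |>.congr_deriv (by simp only [id]; field_simp; ring)
      |>.hasDerivWithinAt
  · have : 0 < 1 - c := by linarith
    rw [inv_add_inv hc₀.ne' this.ne', le_sub_iff_add_le, zero_add, le_div_iff₀ (by positivity)]
    nlinarith [sq_nonneg (2 * c - 1)]

lemma ConvexOn.sum_comp_apply {ι : Type*} [Fintype ι] {s : Set ℝ} {f : ℝ → ℝ}
    (hf : ConvexOn ℝ s f) : ConvexOn ℝ {c : ι → ℝ | ∀ i, c i ∈ s} (fun c => ∑ i, f (c i)) := by
  refine ⟨fun x hx y hy a b ha hb hab i => hf.1 (hx i) (hy i) ha hb hab, ?_⟩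
  intro x hx y hy a b ha hb hab
  simp only [smul_eq_mul, Finset.mul_sum, ← Finset.sum_add_distrib]
  exact Finset.sum_le_sum fun i _ => hf.2 (hx i) (hy i) ha hb hab

/-- The matrix `C_K`: `C_M` is the paper's, and `C_G = C_M + E_Δ`. -/
noncomputable def dualCurvature {n : ℕ} (lam : ℝ) (y : Fin n → ℝ)
    (K : Matrix (Fin n) (Fin n) ℝ) : Matrix (Fin n) (Fin n) ℝ :=
  ((4 : ℝ) / n) • 1 + (1 / (lam * (n : ℝ) ^ 2)) • (diagonal y * K * diagonal y)

lemma dualCurvature_posDef {n : ℕ} {lam : ℝ} (y : Fin n → ℝ) {K : Matrix (Fin n) (Fin n) ℝ}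
    (hn : 0 < n) (hlam : 0 < lam) (hK : K.PosSemidef) : (dualCurvature lam y K).PosDef := by
  refine PosDef.add_posSemidef (PosDef.one.smul (by positivity))
    (PosSemidef.smul ?_ (by positivity))
  simpa using hK.conjTranspose_mul_mul_same (diagonal y)

lemma dualObj_eq {n : ℕ} (lam : ℝ) (y : Fin n → ℝ) (K : Matrix (Fin n) (Fin n) ℝ)
    (c : Fin n → ℝ) :
    dualObj lam y K c = (1 / n) * ∑ i, (phiEnt (c i) - 2 * c i ^ 2) +
      1 / 2 * (c ⬝ᵥ (dualCurvature lam y K *ᵥ c)) := by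
  have hY : c ⬝ᵥ ((diagonal y * K * diagonal y) *ᵥ c) =
      (fun i => y i * c i) ⬝ᵥ (K *ᵥ fun i => y i * c i) := by
    have hyc : (fun i => y i * c i) = diagonal y *ᵥ c :=
      funext fun i => (mulVec_diagonal y c i).symm
    rw [hyc, ← mulVec_mulVec, ← mulVec_mulVec, dotProduct_mulVec c, ← mulVec_transpose,
      diagonal_transpose]
  have hc : c ⬝ᵥ c = ∑ i, c i ^ 2 := by simp only [dotProduct, sq]
  rw [dualObj, dualCurvature, add_mulVec, dotProduct_add, smul_mulVec, smul_mulVec, one_mulVec,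
    dotProduct_smul, dotProduct_smul, hY, hc, Finset.sum_sub_distrib, smul_eq_mul, smul_eq_mul,
    ← Finset.mul_sum]
  ring

lemma nonneg_of_forall_mul_add_sq_mul_nonneg {a b : ℝ}
    (h : ∀ t ∈ Ioo (0 : ℝ) 1, 0 ≤ t * a + t ^ 2 * b) : 0 ≤ a := by
  have hlim : Tendsto (fun t => a + t * b) (𝓝[>] 0) (𝓝 a) :=
    ((by fun_prop : Continuous fun t : ℝ => a + t * b).tendsto' 0 a (by simp)).mono_left
      nhdsWithin_le_nhds
  refine ge_of_tendsto hlim ?_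
  filter_upwards [Ioo_mem_nhdsGT (zero_lt_one' ℝ)] with t ht
  exact nonneg_of_mul_nonneg_right (by linear_combination h t ht) ht.1

section QuadraticMinimizers

variable {ι : Type*} [Fintype ι]

lemma Matrix.IsSymm.dotProduct_mulVec_comm {A : Matrix ι ι ℝ} (hA : A.IsSymm) (v w : ι → ℝ) :
    v ⬝ᵥ (A *ᵥ w) = w ⬝ᵥ (A *ᵥ v) := by
  rw [dotProduct_mulVec, ← mulVec_transpose, hA.eq, dotProduct_comm]

lemma Matrix.IsSymm.dotProduct_mulVec_add_smul {A : Matrix ι ι ℝ} (hA : A.IsSymm)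
    (z d : ι → ℝ) (t : ℝ) :
    (z + t • d) ⬝ᵥ (A *ᵥ (z + t • d)) =
      z ⬝ᵥ (A *ᵥ z) + 2 * t * (z ⬝ᵥ (A *ᵥ d)) + t ^ 2 * (d ⬝ᵥ (A *ᵥ d)) := by
  rw [mulVec_add, mulVec_smul, dotProduct_add, add_dotProduct, add_dotProduct, dotProduct_smul,
    smul_dotProduct, smul_dotProduct, dotProduct_smul, hA.dotProduct_mulVec_comm d z]
  simp only [smul_eq_mul]
  ring

lemma Matrix.IsSymm.mulVec_dotProduct_mulVec_mulVec {S : Matrix ι ι ℝ} (hS : S.IsSymm)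
    (A : Matrix ι ι ℝ) (v w : ι → ℝ) :
    (S *ᵥ v) ⬝ᵥ (A *ᵥ (S *ᵥ w)) = v ⬝ᵥ ((S * A * S) *ᵥ w) := by
  rw [dotProduct_comm, hS.dotProduct_mulVec_comm, mulVec_mulVec, mulVec_mulVec, Matrix.mul_assoc]

lemma EuclideanSpace.inner_toLp_toLp_real (v w : ι → ℝ) :
    inner ℝ (WithLp.toLp 2 v) (WithLp.toLp 2 w) = v ⬝ᵥ w := by
  rw [EuclideanSpace.inner_toLp_toLp, star_trivial, dotProduct_comm]

variable {s : Set (ι → ℝ)} {g : (ι → ℝ) → ℝ}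

/-- The first-order condition at the minimizer makes the linear term of the expansion
nonnegative. -/
lemma IsMinOn.add_quadratic_growth (hg : ConvexOn ℝ s g) {A : Matrix ι ι ℝ} (hA : A.IsSymm)
    {z x : ι → ℝ} (hz : z ∈ s) (hx : x ∈ s)
    (hmin : IsMinOn (fun c => g c + 1 / 2 * (c ⬝ᵥ (A *ᵥ c))) s z) :
    g z + 1 / 2 * (z ⬝ᵥ (A *ᵥ z)) + 1 / 2 * ((x - z) ⬝ᵥ (A *ᵥ (x - z))) ≤
      g x + 1 / 2 * (x ⬝ᵥ (A *ᵥ x)) := by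
  set d := x - z
  have hx_eq : x = z + (1 : ℝ) • d := by simp [d]
  have hfirst : 0 ≤ g x - g z + z ⬝ᵥ (A *ᵥ d) := by
    refine nonneg_of_forall_mul_add_sq_mul_nonneg (b := 1 / 2 * (d ⬝ᵥ (A *ᵥ d))) fun t ht => ?_
    have hseg : (1 - t) • z + t • x = z + t • d := by
      rw [hx_eq, one_smul, smul_add, sub_smul, one_smul]; abel
    have hmem : z + t • d ∈ s := hseg ▸ hg.1 hz hx (by linarith [ht.2]) ht.1.le (by ring)
    have hmin_t := isMinOn_iff.mp hmin _ hmem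
    have hconv := hseg ▸ hg.2 hz hx (by linarith [ht.2]) ht.1.le (by ring)
    rw [hA.dotProduct_mulVec_add_smul] at hmin_t
    simp only [smul_eq_mul] at hconv
    nlinarith
  rw [hx_eq, hA.dotProduct_mulVec_add_smul, ← hx_eq]
  linarith

lemma IsMinOn.add_quadratic_perturbation (hg : ConvexOn ℝ s g) {A E : Matrix ι ι ℝ}
    (hA : A.IsSymm) (hE : E.IsSymm) {z z' : ι → ℝ} (hz : z ∈ s) (hz' : z' ∈ s)
    (hmin : IsMinOn (fun c => g c + 1 / 2 * (c ⬝ᵥ (A *ᵥ c))) s z)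
    (hmin' : IsMinOn (fun c => g c + 1 / 2 * (c ⬝ᵥ ((A + E) *ᵥ c))) s z') :
    (z' - z) ⬝ᵥ ((A + E) *ᵥ (z' - z)) + (E *ᵥ z) ⬝ᵥ (z' - z) ≤ 0 := by
  have hAE : (A + E).IsSymm := hA.add hE
  have h := hmin.add_quadratic_growth hg hA hz hz'
  have h' := hmin'.add_quadratic_growth hg hAE hz' hz
  set d := z' - z
  have hz'_eq : z' = z + (1 : ℝ) • d := by simp [d]
  have hA' := hA.dotProduct_mulVec_add_smul z d 1
  have hAE' := hAE.dotProduct_mulVec_add_smul z d 1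
  rw [← hz'_eq] at hA' hAE'
  rw [show z - z' = -d by simp [d], mulVec_neg, dotProduct_neg, neg_dotProduct, neg_neg] at h'
  rw [dotProduct_comm (E *ᵥ z), hE.dotProduct_mulVec_comm]
  simp only [add_mulVec, dotProduct_add] at h' hAE' ⊢
  linarith

end QuadraticMinimizers

lemma abs_inner_le_of_mul_sq_norm_add_inner_nonpos {F : Type*} [NormedAddCommGroup F]
    [InnerProductSpace ℝ F] {δ : ℝ} (hδ : 0 < δ) {u β : F}
    (h : δ * ‖u‖ ^ 2 + inner ℝ β u ≤ 0) (α : F) :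
    |inner ℝ α u| ≤ 1 / (2 * δ) * (|inner ℝ α β| + ‖α‖ * ‖β‖) := by
  set r := 1 / (2 * δ)
  have hr : 0 < r := by positivity
  have hball : ‖u + r • β‖ ≤ r * ‖β‖ := by
    refine (pow_le_pow_iff_left₀ (norm_nonneg _) (by positivity) two_ne_zero).mp ?_
    have hexp : ‖u + r • β‖ ^ 2 = 1 / δ * (δ * ‖u‖ ^ 2 + inner ℝ β u) + (r * ‖β‖) ^ 2 := by
      rw [norm_add_sq_real, inner_smul_right, norm_smul, Real.norm_of_nonneg hr.le,
        real_inner_comm, show r = 1 / (2 * δ) from rfl]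
      field_simp
    rw [hexp]
    nlinarith [mul_nonpos_of_nonneg_of_nonpos (one_div_pos.mpr hδ).le h]
  have hsplit : inner ℝ α u = inner ℝ α (u + r • β) - r * inner ℝ α β := by
    rw [inner_add_right, inner_smul_right]; ring
  calc |inner ℝ α u| ≤ |inner ℝ α (u + r • β)| + |r * inner ℝ α β| := hsplit ▸ abs_sub _ _
    _ ≤ ‖α‖ * (r * ‖β‖) + r * |inner ℝ α β| := by
      rw [abs_mul, abs_of_pos hr]
      gcongr
      exact (abs_real_inner_le_norm _ _).trans (by gcongr)
    _ = r * (|inner ℝ α β| + ‖α‖ * ‖β‖) := by ring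

lemma abs_dotProduct_le_calE {n : ℕ} {C E S : Matrix (Fin n) (Fin n) ℝ} (hC : IsUnit C.det)
    (hS : S.IsSymm) (hSS : S * S = C⁻¹) (hγ : opNorm (S * E * S) < 1) {b d : Fin n → ℝ}
    (hd : d ⬝ᵥ ((C + E) *ᵥ d) + b ⬝ᵥ d ≤ 0) (a : Fin n → ℝ) :
    |a ⬝ᵥ d| ≤ calE C (opNorm (S * E * S)) a b := by
  set T := toEuclideanCLM (𝕜 := ℝ) (S * E * S)
  obtain ⟨u, hu⟩ : ∃ u, S *ᵥ u = d := ⟨S *ᵥ (C *ᵥ d), by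
    rw [mulVec_mulVec, mulVec_mulVec, hSS, nonsing_inv_mul C hC, one_mulVec]⟩
  have hSCS : S * C * S = 1 :=
    mul_eq_one_comm.mp (by rw [← Matrix.mul_assoc, hSS, nonsing_inv_mul C hC])
  have hwhite : ∀ v w : Fin n → ℝ,
      inner ℝ (WithLp.toLp 2 (S *ᵥ v)) (WithLp.toLp 2 (S *ᵥ w)) = v ⬝ᵥ (C⁻¹ *ᵥ w) := by
    intro v w
    rw [EuclideanSpace.inner_toLp_toLp_real, ← one_mulVec (S *ᵥ w),
      hS.mulVec_dotProduct_mulVec_mulVec, Matrix.mul_one, hSS]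
  set x : EuclideanSpace ℝ (Fin n) := WithLp.toLp 2 u
  have hdx : ∀ v, v ⬝ᵥ d = inner ℝ (WithLp.toLp 2 (S *ᵥ v)) x := by
    intro v
    rw [EuclideanSpace.inner_toLp_toLp_real, ← hu, dotProduct_comm (S *ᵥ v),
      hS.dotProduct_mulVec_comm]
  have hquad : d ⬝ᵥ ((C + E) *ᵥ d) = ‖x‖ ^ 2 + inner ℝ x (T x) := by
    rw [← hu, add_mulVec, dotProduct_add, hS.mulVec_dotProduct_mulVec_mulVec,
      hS.mulVec_dotProduct_mulVec_mulVec, hSCS, one_mulVec, ← real_inner_self_eq_norm_sq,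
      toEuclideanCLM_toLp, EuclideanSpace.inner_toLp_toLp_real, EuclideanSpace.inner_toLp_toLp_real]
  have hspec : -(opNorm (S * E * S) * ‖x‖ ^ 2) ≤ inner ℝ x (T x) := by
    have := (abs_real_inner_le_norm x (T x)).trans
      (mul_le_mul_of_nonneg_left (T.le_opNorm x) (norm_nonneg x))
    rw [opNorm]
    nlinarith [neg_abs_le (inner ℝ x (T x))]
  have hball := abs_inner_le_of_mul_sq_norm_add_inner_nonpos (sub_pos.mpr hγ)
    (u := x) (β := WithLp.toLp 2 (S *ᵥ b)) (by rw [← hdx]; linarith) (WithLp.toLp 2 (S *ᵥ a))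
  rwa [← hdx, hwhite, norm_eq_sqrt_real_inner, norm_eq_sqrt_real_inner, hwhite, hwhite] at hball

lemma score_sub_score {n : ℕ} (lam : ℝ) (y k m c c' : Fin n → ℝ) :
    score lam y k c' - score lam y m c =
      1 / (lam * n) * ((k - m) ⬝ᵥ (diagonal y *ᵥ c)) +
        ((1 / (lam * n)) • (diagonal y *ᵥ m)) ⬝ᵥ (c' - c) +
        ((1 / (lam * n)) • (diagonal y *ᵥ (k - m))) ⬝ᵥ (c' - c) := by
  simp only [score, dotProduct, mulVec_diagonal, Pi.smul_apply, Pi.sub_apply, smul_eq_mul,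
    Finset.mul_sum, ← Finset.sum_sub_distrib, ← Finset.sum_add_distrib]
  exact Finset.sum_congr rfl fun i _ => by ring

theorem curvature_spectral_perturbation_general
    {n : ℕ} (hn : 0 < n)
    (y : Fin n → ℝ)
    (lam : ℝ) (hlam : 0 < lam)
    (G M : Matrix (Fin n) (Fin n) ℝ) (hG : G.PosSemidef) (hM : M.PosSemidef)
    (cG cM : Fin n → ℝ)
    (hcG : (∀ i, cG i ∈ Icc (0:ℝ) 1) ∧
      IsMinOn (dualObj lam y G) {c | ∀ i, c i ∈ Icc (0:ℝ) 1} cG)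
    (hcM : (∀ i, cM i ∈ Icc (0:ℝ) 1) ∧
      IsMinOn (dualObj lam y M) {c | ∀ i, c i ∈ Icc (0:ℝ) 1} cM)
    (k m : Fin n → ℝ)
    (Y : Matrix (Fin n) (Fin n) ℝ) (hYdef : Y = Matrix.diagonal y)
    (Δ : Matrix (Fin n) (Fin n) ℝ) (hΔdef : Δ = G - M)
    (CM : Matrix (Fin n) (Fin n) ℝ)
    (hCMdef : CM = ((4 : ℝ) / n) • (1 : Matrix (Fin n) (Fin n) ℝ) +
      (1 / (lam * (n : ℝ) ^ 2)) • (Y * M * Y))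
    (EΔ : Matrix (Fin n) (Fin n) ℝ)
    (hEΔdef : EΔ = (1 / (lam * (n : ℝ) ^ 2)) • (Y * Δ * Y))
    (b : Fin n → ℝ) (hbdef : b = EΔ *ᵥ cM)
    -- `S = C_M^{−1/2}` is the (unique) positive semidefinite inverse square root of `C_M`
    (S : Matrix (Fin n) (Fin n) ℝ) (hS : S.PosSemidef) (hSsq : S * S = CM⁻¹)
    (γ : ℝ) (hγdef : γ = opNorm (S * EΔ * S))
    (ζ am aζ : Fin n → ℝ)
    (hζdef : ζ = k - m)
    (hamdef : am = (1 / (lam * n)) • (Y *ᵥ m))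
    (haζdef : aζ = (1 / (lam * n)) • (Y *ᵥ ζ))
    (hγ : γ < 1) :
    |score lam y k cG - score lam y m cM| ≤
      (1 / (lam * n)) * |ζ ⬝ᵥ (Y *ᵥ cM)| + calE CM γ am b + calE CM γ aζ b := by
  obtain ⟨hcG_mem, hcG_min⟩ := hcG
  obtain ⟨hcM_mem, hcM_min⟩ := hcM
  subst hYdef hΔdef hbdef hγdef hζdef hamdef haζdef
  have hCM : CM = dualCurvature lam y M := hCMdef
  have hCG : CM + EΔ = dualCurvature lam y G := by
    rw [hCMdef, hEΔdef, dualCurvature, Matrix.mul_sub, Matrix.sub_mul, smul_sub]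
    abel
  have hCM_pd : CM.PosDef := hCM ▸ dualCurvature_posDef y hn hlam hM
  have hCM_symm : CM.IsSymm := isHermitian_iff_isSymm.mp hCM_pd.isHermitian
  have hCG_symm : (CM + EΔ).IsSymm :=
    hCG ▸ isHermitian_iff_isSymm.mp (dualCurvature_posDef y hn hlam hG).isHermitian
  have hE_symm : EΔ.IsSymm := by simpa only [add_sub_cancel_left] using hCG_symm.sub hCM_symm
  have hg : ConvexOn ℝ {c | ∀ i, c i ∈ Icc (0:ℝ) 1}
      (fun c : Fin n → ℝ => (1 / n : ℝ) * ∑ i, (phiEnt (c i) - 2 * c i ^ 2)) :=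
    convexOn_phiEnt_sub_two_mul_sq.sum_comp_apply.smul (by positivity)
  rw [funext (dualObj_eq lam y M), ← hCM] at hcM_min
  rw [funext (dualObj_eq lam y G), ← hCG] at hcG_min
  have hd := hcM_min.add_quadratic_perturbation hg hCM_symm hE_symm hcM_mem hcG_mem hcG_min
  have hfunctional := abs_dotProduct_le_calE ((isUnit_iff_isUnit_det CM).mp hCM_pd.isUnit)
    (isHermitian_iff_isSymm.mp hS.isHermitian) hSsq hγ hd
  rw [score_sub_score]
  refine (abs_add_three _ _ _).trans (add_le_add_three ?_ (hfunctional _) (hfunctional _))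
  rw [abs_mul, abs_of_pos (by positivity : (0 : ℝ) < 1 / (lam * n))]

/-- Curvature–spectral perturbation bound for the dual scores: when the relative
curvature size `γ = ‖C_M^{−1/2} E_Δ C_M^{−1/2}‖_op` is below 1,
`|s_{k,G} − s_{m,M}| ≤ (1/(λn))·|ζᵀ Y c_M| + ℰ(a_m; b) + ℰ(a_ζ; b)`. -/
theorem curvature_spectral_perturbation
    {n : ℕ} (hn : 0 < n)
    (y : Fin n → ℝ) (hy : ∀ i, y i = 1 ∨ y i = -1)
    (lam : ℝ) (hlam : 0 < lam)
    (G M : Matrix (Fin n) (Fin n) ℝ) (hG : G.PosSemidef) (hM : M.PosSemidef)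
    (cG cM : Fin n → ℝ)
    (hcG : (∀ i, cG i ∈ Icc (0:ℝ) 1) ∧
      IsMinOn (dualObj lam y G) {c | ∀ i, c i ∈ Icc (0:ℝ) 1} cG)
    (hcM : (∀ i, cM i ∈ Icc (0:ℝ) 1) ∧
      IsMinOn (dualObj lam y M) {c | ∀ i, c i ∈ Icc (0:ℝ) 1} cM)
    (k m : Fin n → ℝ)
    (Y : Matrix (Fin n) (Fin n) ℝ) (hYdef : Y = Matrix.diagonal y)
    (Δ : Matrix (Fin n) (Fin n) ℝ) (hΔdef : Δ = G - M)
    (CM : Matrix (Fin n) (Fin n) ℝ)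
    (hCMdef : CM = ((4 : ℝ) / n) • (1 : Matrix (Fin n) (Fin n) ℝ) +
      (1 / (lam * (n : ℝ) ^ 2)) • (Y * M * Y))
    (EΔ : Matrix (Fin n) (Fin n) ℝ)
    (hEΔdef : EΔ = (1 / (lam * (n : ℝ) ^ 2)) • (Y * Δ * Y))
    (b : Fin n → ℝ) (hbdef : b = EΔ *ᵥ cM)
    -- `S = C_M^{−1/2}` is the (unique) positive semidefinite inverse square root of `C_M`
    (S : Matrix (Fin n) (Fin n) ℝ) (hS : S.PosSemidef) (hSsq : S * S = CM⁻¹)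
    (γ : ℝ) (hγdef : γ = opNorm (S * EΔ * S))
    (ζ am aζ : Fin n → ℝ)
    (hζdef : ζ = k - m)
    (hamdef : am = (1 / (lam * n)) • (Y *ᵥ m))
    (haζdef : aζ = (1 / (lam * n)) • (Y *ᵥ ζ))
    (hγ : γ < 1) :
    |score lam y k cG - score lam y m cM| ≤
      (1 / (lam * n)) * |ζ ⬝ᵥ (Y *ᵥ cM)| + calE CM γ am b + calE CM γ aζ b :=
  curvature_spectral_perturbation_general hn y lam hlam G M hG hM cG cM hcG hcM k m Y hYdef Δ hΔdef
    CM hCMdef EΔ hEΔdef b hbdef S hS hSsq γ hγdef ζ am aζ hζdef hamdef haζdef hγ
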